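/- For every n ≥ 1 and every permutation π ∈ S_n: π avoids the pattern 321 if and only if ine π = 0, where ine π = nest(π^{-1}). -/

import Mathlib

open scoped Classical
open Finset

/-- Value of `π` at the 1-indexed position `i`, as a number in `{1,…,n}`;
positions outside `[1,n]` get the boundary value `b`. -/
def pvalB {n : ℕ} (b : ℕ) (π : Equiv.Perm (Fin n)) (i : ℕ) : ℕ :=
  if h : 1 ≤ i ∧ i ≤ n then (π ⟨i - 1, by omega⟩).val + 1 else b

/-- Value of `π` at the 1-indexed position `i` (boundary value 0). -/
def pval {n : ℕ} (π : Equiv.Perm (Fin n)) : ℕ → ℕ := pvalB 0 π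

/-- number of descents -/
def desStat {n : ℕ} (π : Equiv.Perm (Fin n)) : ℕ :=
  ((Finset.Icc 1 (n - 1)).filter fun i => pval π (i + 1) < pval π i).card

/-- number of excedances -/
def excStat {n : ℕ} (π : Equiv.Perm (Fin n)) : ℕ :=
  ((Finset.Icc 1 n).filter fun i => i < pval π i).card

/-- number of weak excedances -/
def wexStat {n : ℕ} (π : Equiv.Perm (Fin n)) : ℕ :=
  ((Finset.Icc 1 n).filter fun i => i ≤ pval π i).card

/-- number of inversions -/
def invStat {n : ℕ} (π : Equiv.Perm (Fin n)) : ℕ :=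
  (((Finset.Icc 1 n) ×ˢ (Finset.Icc 1 n)).filter fun p =>
    p.1 < p.2 ∧ pval π p.2 < pval π p.1).card

/-- number of fixed points -/
def fixStat {n : ℕ} (π : Equiv.Perm (Fin n)) : ℕ :=
  ((Finset.Icc 1 n).filter fun i => pval π i = i).card

/-- number of occurrences of the vincular pattern 31-2:
pairs (i,j) with i+1 < j ≤ n and π(i+1) < π(j) < π(i) -/
def v31_2 {n : ℕ} (π : Equiv.Perm (Fin n)) : ℕ :=
  (((Finset.Icc 1 n) ×ˢ (Finset.Icc 1 n)).filter fun p =>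
    p.1 + 1 < p.2 ∧ pval π (p.1 + 1) < pval π p.2 ∧ pval π p.2 < pval π p.1).card

/-- number of occurrences of the vincular pattern 13-2:
pairs (i,j) with i+1 < j ≤ n and π(i) < π(j) < π(i+1) -/
def v13_2 {n : ℕ} (π : Equiv.Perm (Fin n)) : ℕ :=
  (((Finset.Icc 1 n) ×ˢ (Finset.Icc 1 n)).filter fun p =>
    p.1 + 1 < p.2 ∧ pval π p.1 < pval π p.2 ∧ pval π p.2 < pval π (p.1 + 1)).card

/-- number of occurrences of the vincular pattern 2-31:
pairs (i,j) with 1 ≤ j < i ≤ n-1 and π(i+1) < π(j) < π(i); here `p = (i, j)` -/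
def v2_31 {n : ℕ} (π : Equiv.Perm (Fin n)) : ℕ :=
  (((Finset.Icc 1 (n - 1)) ×ˢ (Finset.Icc 1 (n - 1))).filter fun p =>
    p.2 < p.1 ∧ pval π (p.1 + 1) < pval π p.2 ∧ pval π p.2 < pval π p.1).card

/-- number of occurrences of the vincular pattern 2-13:
pairs (i,j) with 1 ≤ j < i ≤ n-1 and π(i) < π(j) < π(i+1); here `p = (i, j)` -/
def v2_13 {n : ℕ} (π : Equiv.Perm (Fin n)) : ℕ :=
  (((Finset.Icc 1 (n - 1)) ×ˢ (Finset.Icc 1 (n - 1))).filter fun p =>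
    p.2 < p.1 ∧ pval π p.1 < pval π p.2 ∧ pval π p.2 < pval π (p.1 + 1)).card

/-- number of occurrences of the vincular pattern 3-12:
pairs (i,j) with 1 ≤ i < j ≤ n-1 and π(j) < π(j+1) < π(i) -/
def v3_12 {n : ℕ} (π : Equiv.Perm (Fin n)) : ℕ :=
  (((Finset.Icc 1 (n - 1)) ×ˢ (Finset.Icc 1 (n - 1))).filter fun p =>
    p.1 < p.2 ∧ pval π p.2 < pval π (p.2 + 1) ∧ pval π (p.2 + 1) < pval π p.1).card

/-- number of admissible inversions -/
noncomputable def adiStat {n : ℕ} (π : Equiv.Perm (Fin n)) : ℕ :=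
  (((Finset.Icc 1 n) ×ˢ (Finset.Icc 1 n)).filter fun p =>
    p.1 < p.2 ∧ pval π p.2 < pval π p.1 ∧
      ((p.2 < n ∧ pval π p.2 < pval π (p.2 + 1)) ∨
        ∃ l, p.1 < l ∧ l < p.2 ∧ pval π l < pval π p.2)).card

/-- number of star admissible inversions -/
noncomputable def adiStarStat {n : ℕ} (π : Equiv.Perm (Fin n)) : ℕ :=
  (((Finset.Icc 1 n) ×ˢ (Finset.Icc 1 n)).filter fun p =>
    p.1 < p.2 ∧ pval π p.2 < pval π p.1 ∧
      ((1 < p.1 ∧ pval π (p.1 - 1) < pval π p.1) ∨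
        ∃ l, p.1 < l ∧ l < p.2 ∧ pval π p.1 < pval π l)).card

/-- nesting number -/
def nestStat {n : ℕ} (π : Equiv.Perm (Fin n)) : ℕ :=
  (((Finset.Icc 1 n) ×ˢ (Finset.Icc 1 n)).filter fun p =>
    p.1 < p.2 ∧ p.2 ≤ pval π p.2 ∧ pval π p.2 < pval π p.1).card +
  (((Finset.Icc 1 n) ×ˢ (Finset.Icc 1 n)).filter fun p =>
    p.1 < p.2 ∧ pval π p.2 < pval π p.1 ∧ pval π p.1 < p.1).card

/-- `π` avoids the pattern given (in one-line notation) by the sequence `p` -/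
def avoids {n k : ℕ} (π : Equiv.Perm (Fin n)) (p : Fin k → ℕ) : Prop :=
  ¬ ∃ f : Fin k ↪o Fin n, ∀ a b : Fin k, p a < p b ↔ π (f a) < π (f b)

/-- `π` has no double descent, with boundary values `b` at positions 0 and n+1 -/
def noDD {n : ℕ} (b : ℕ) (π : Equiv.Perm (Fin n)) : Prop :=
  ∀ i, 1 ≤ i → i ≤ n →
    ¬ (pvalB b π i < pvalB b π (i - 1) ∧ pvalB b π (i + 1) < pvalB b π i)

/-- alternating (up-down): π(1) < π(2) > π(3) < π(4) > ⋯ -/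
def isAlt {n : ℕ} (π : Equiv.Perm (Fin n)) : Prop :=
  ∀ i, 1 ≤ i → i + 1 ≤ n →
    (Odd i → pval π i < pval π (i + 1)) ∧ (Even i → pval π (i + 1) < pval π i)

/-- down-up: π(1) > π(2) < π(3) > π(4) < ⋯ -/
def isDownUp {n : ℕ} (π : Equiv.Perm (Fin n)) : Prop :=
  ∀ i, 1 ≤ i → i + 1 ≤ n →
    (Odd i → pval π (i + 1) < pval π i) ∧ (Even i → pval π i < pval π (i + 1))

/-- `i` is a foremaximum of `π` -/
def isForemax {n : ℕ} (π : Equiv.Perm (Fin n)) (i : ℕ) : Prop :=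
  1 ≤ i ∧ i ≤ n ∧ (∀ j, 1 ≤ j → j ≤ i → pval π j ≤ pval π i) ∧
    (i = n ∨ pval π i < pval π (i + 1))

/-- coderangement: no foremaximum -/
def isCoderangement {n : ℕ} (π : Equiv.Perm (Fin n)) : Prop :=
  ∀ i, ¬ isForemax π i

/-- derangement: no fixed point -/
def isDerangement {n : ℕ} (π : Equiv.Perm (Fin n)) : Prop := ∀ i, π i ≠ i

/-- the order-reversing permutation of positions -/
def revPermN (n : ℕ) : Equiv.Perm (Fin n) := ⟨Fin.rev, Fin.rev, Fin.rev_rev, Fin.rev_rev⟩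

/-- the reverse of `π`: πʳ(i) = π(n+1-i) -/
def reverseP {n : ℕ} (π : Equiv.Perm (Fin n)) : Equiv.Perm (Fin n) := (revPermN n).trans π

/-
A 321-occurrence `a < b < c` of `σ` contains a nesting of `σ`: the pair `(a, b)` if `b ≤ σ b`,
and the pair `(b, c)` otherwise. Conversely, a nesting `a < b ≤ σ b < σ a` extends to a
321-occurrence by counting: `a` and the `n - 1 - b` positions after `b` cannot all be sent into
the at most `n - 1 - b` values above `σ b`. Nestings of the second kind are handled the same way
to the left of `a`. Since `321` is an involution, `π` and `π⁻¹` contain it together.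
-/

section Pattern321

variable {α β : Type*}

def HasPattern321 [LT α] [LT β] (f : α → β) : Prop :=
  ∃ a b c : α, a < b ∧ b < c ∧ f c < f b ∧ f b < f a

theorem HasPattern321.symm [LinearOrder α] [LinearOrder β] {e : α ≃ β}
    (h : HasPattern321 e) : HasPattern321 e.symm := by
  obtain ⟨a, b, c, hab, hbc, hcb, hba⟩ := h
  exact ⟨e c, e b, e a, hcb, hba, by simpa using hab, by simpa using hbc⟩

theorem hasPattern321_symm_iff [LinearOrder α] [LinearOrder β] {e : α ≃ β} :
    HasPattern321 e.symm ↔ HasPattern321 e :=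
  ⟨fun h => by simpa using h.symm, HasPattern321.symm⟩

end Pattern321

theorem avoids_321_iff {n : ℕ} (π : Equiv.Perm (Fin n)) :
    avoids π ![3, 2, 1] ↔ ¬ HasPattern321 π := by
  unfold avoids HasPattern321
  refine not_congr ⟨fun ⟨f, hf⟩ => ?_, fun ⟨a, b, c, hab, hbc, hcb, hba⟩ => ?_⟩
  · exact ⟨f 0, f 1, f 2, f.strictMono (by decide), f.strictMono (by decide),
      (hf 2 1).mp (by decide), (hf 1 0).mp (by decide)⟩
  · have hmono : StrictMono ![a, b, c] := by
      rw [Fin.strictMono_iff_lt_succ]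
      intro i
      fin_cases i
      exacts [hab, hbc]
    refine ⟨OrderEmbedding.ofStrictMono _ hmono, fun i j => ?_⟩
    have hca := hcb.trans hba
    fin_cases i <;> fin_cases j <;> simp [hcb, hba, hca, hcb.le, hba.le, hca.le]

theorem pval_val_add_one {n : ℕ} (σ : Equiv.Perm (Fin n)) (a : Fin n) :
    pval σ (a + 1) = σ a + 1 := by
  simp [pval, pvalB]

theorem forall_mem_Icc_one_iff_forall_fin {n : ℕ} {P : ℕ → Prop} :
    (∀ i ∈ Icc 1 n, P i) ↔ ∀ a : Fin n, P (a + 1) := by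
  refine ⟨fun h a => h _ (mem_Icc.mpr ⟨by omega, a.isLt⟩), fun h i hi => ?_⟩
  obtain ⟨hi1, hin⟩ := mem_Icc.mp hi
  simpa [Nat.sub_add_cancel hi1] using h ⟨i - 1, by omega⟩

theorem forall_mem_Icc_one_iff_forall_fin₂ {n : ℕ} {P : ℕ → ℕ → Prop} :
    (∀ i j, i ∈ Icc 1 n → j ∈ Icc 1 n → P i j) ↔ ∀ a b : Fin n, P (a + 1) (b + 1) := by
  simp only [forall_comm (α := ℕ), forall_mem_Icc_one_iff_forall_fin]

theorem nestStat_eq_zero_iff {n : ℕ} (σ : Equiv.Perm (Fin n)) :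
    nestStat σ = 0 ↔ (∀ a b : Fin n, a < b → b ≤ σ b → σ a ≤ σ b) ∧
      (∀ a b : Fin n, a < b → σ b < σ a → a ≤ σ a) := by
  simp only [nestStat, Nat.add_eq_zero_iff, card_eq_zero, filter_eq_empty_iff, mem_product,
    Prod.forall, and_imp]
  rw [forall_mem_Icc_one_iff_forall_fin₂, forall_mem_Icc_one_iff_forall_fin₂]
  simp only [pval_val_add_one, Nat.add_lt_add_iff_right, Nat.add_le_add_iff_right, ← Fin.lt_def,
    ← Fin.le_def, not_and, not_lt]

namespace Equiv.Perm

variable {n : ℕ} (σ : Equiv.Perm (Fin n)) {a b : Fin n}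

theorem exists_gt_apply_lt_of_le_apply (hab : a < b) (hb : b ≤ σ b) (hba : σ b < σ a) :
    ∃ c, b < c ∧ σ c < σ b := by
  obtain ⟨x, hx, hxb⟩ : ∃ x ∈ insert a (Ioi b), σ x ∉ Ioi (σ b) := by
    by_contra! h
    have hcard := card_le_card_of_injOn σ (fun x hx => h x hx) σ.injective.injOn
    rw [card_insert_of_notMem (by simp [hab.le]), Fin.card_Ioi, Fin.card_Ioi] at hcard
    rw [Fin.le_def] at hb
    omega
  rw [mem_Ioi, not_lt] at hxb
  rcases mem_insert.mp hx with rfl | hx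
  · exact absurd hba hxb.not_gt
  · exact ⟨x, mem_Ioi.mp hx, hxb.lt_of_ne (σ.injective.ne (mem_Ioi.mp hx).ne')⟩

theorem exists_lt_lt_apply_of_apply_le (hab : a < b) (hba : σ b < σ a) (ha : σ a ≤ a) :
    ∃ c, c < a ∧ σ a < σ c := by
  obtain ⟨x, hx, hax⟩ : ∃ x ∈ insert b (Iio a), σ x ∉ Iio (σ a) := by
    by_contra! h
    have hcard := card_le_card_of_injOn σ (fun x hx => h x hx) σ.injective.injOn
    rw [card_insert_of_notMem (by simp [hab.le]), Fin.card_Iio, Fin.card_Iio] at hcard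
    rw [Fin.le_def] at ha
    omega
  rw [mem_Iio, not_lt] at hax
  rcases mem_insert.mp hx with rfl | hx
  · exact absurd hba hax.not_gt
  · exact ⟨x, mem_Iio.mp hx, hax.lt_of_ne' (σ.injective.ne (mem_Iio.mp hx).ne)⟩

end Equiv.Perm

theorem nestStat_eq_zero_iff_not_hasPattern321 {n : ℕ} (σ : Equiv.Perm (Fin n)) :
    nestStat σ = 0 ↔ ¬ HasPattern321 σ := by
  rw [nestStat_eq_zero_iff]
  constructor
  · rintro ⟨h₁, h₂⟩ ⟨a, b, c, hab, hbc, hcb, hba⟩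
    rcases le_or_gt b (σ b) with hb | hb
    · exact (h₁ a b hab hb).not_gt hba
    · exact (h₂ b c hbc hcb).not_gt hb
  · intro h
    refine ⟨fun a b hab hb => not_lt.mp fun hba => ?_, fun a b hab hba => not_lt.mp fun ha => ?_⟩
    · obtain ⟨c, hbc, hcb⟩ := σ.exists_gt_apply_lt_of_le_apply hab hb hba
      exact h ⟨a, b, c, hab, hbc, hcb, hba⟩
    · obtain ⟨c, hca, hac⟩ := σ.exists_lt_lt_apply_of_apply_le hab hba ha.le
      exact h ⟨c, a, b, hca, hab, hba, hac⟩

theorem stmt7_general (n : ℕ) (π : Equiv.Perm (Fin n)) :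
    avoids π ![3,2,1] ↔ nestStat π.symm = 0 := by
  rw [avoids_321_iff, nestStat_eq_zero_iff_not_hasPattern321, hasPattern321_symm_iff]

/-- π avoids 321 iff its inverse nesting number is 0. -/
theorem stmt7 (n : ℕ) (hn : 1 ≤ n) (π : Equiv.Perm (Fin n)) :
    avoids π ![3,2,1] ↔ nestStat π.symm = 0 :=
  stmt7_general n π
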